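/- Spin marginal of the Edwards–Sokal coupling: let Λ ⊂ ℤ^d be finite, β > 0, (J_e) a nonnegative nearest-neighbor coupling, (h_i) a real field, and σ_{Λ^c} ∈ {−1,+1}^{Λ^c} a boundary condition with nonvanishing ES partition function. Then for every function f of the spins in Λ, Σ_{σ_Λ ∈ {−1,+1}^Λ} Σ_{ω ∈ {0,1}^{E(Λ)}} f(σ_Λ) · φ^{ES}_{Λ}(σ_Λ, ω | σ_{Λ^c}) = ⟨f⟩^{σ_{Λ^c}}_{Λ; J, h}, the finite-volume Ising Gibbs expectation of f with boundary condition σ_{Λ^c}. -/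
import Mathlib


open Finset Real

/-- Vertices of `ℤ^d`. -/
abbrev V (d : ℕ) : Type := Fin d → ℤ

/-- A nearest-neighbour edge of `ℤ^d`, encoded canonically as a pair `(i, k)`
representing the unordered edge `{i, i + e_k}`. -/
abbrev Edge (d : ℕ) : Type := (Fin d → ℤ) × Fin d

/-- The upper endpoint `i + e_k` of the edge `(i, k)`. -/
def eshift {d : ℕ} (e : Edge d) : V d := Function.update e.1 e.2 (e.1 e.2 + 1)

/-- `E₀(Λ)`: edges with both endpoints in `Λ`. -/
def edgesIn {d : ℕ} (Λ : Finset (V d)) : Finset (Edge d) :=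
  (Λ ×ˢ (Finset.univ : Finset (Fin d))).filter (fun e => eshift e ∈ Λ)

/-- `E(Λ)`: edges with at least one endpoint in `Λ`. -/
def edgesTouch {d : ℕ} (Λ : Finset (V d)) : Finset (Edge d) :=
  ((Λ ∪ (Finset.univ : Finset (Fin d)).biUnion
      (fun k => Λ.image (fun j => Function.update j k (j k - 1)))) ×ˢ
    (Finset.univ : Finset (Fin d))).filter (fun e => e.1 ∈ Λ ∨ eshift e ∈ Λ)

/-- The spin configuration determined inside `Λ` by `τ` and equal to the boundary
condition `η` outside `Λ`. -/
noncomputable def confV {d : ℕ} (Λ : Finset (V d)) (η : V d → ℝ)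
    (τ : {x // x ∈ Λ} → Bool) : V d → ℝ :=
  fun i => if h : i ∈ Λ then (if τ ⟨i, h⟩ then 1 else -1) else η i

/-- The Edwards–Sokal weight of the pair `(σ_Λ, ω)`:
`Π_{e : ω_e=1} [σ=σ]·(e^{2βJ_e}-1) · Π_{i∈Λ} e^{βh_iσ_i}`. -/
noncomputable def ESweight {d : ℕ} (β : ℝ) (Jc : Edge d → ℝ) (h : V d → ℝ)
    (Λ : Finset (V d)) (E : Finset (Edge d)) (η : V d → ℝ)
    (τ : {x // x ∈ Λ} → Bool) (ω : {e // e ∈ E} → Bool) : ℝ :=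
  (∏ e : {e // e ∈ E},
      if ω e then
        (if confV Λ η τ e.val.1 = confV Λ η τ (eshift e.val) then
          Real.exp (2 * β * Jc e.val) - 1 else 0)
      else 1)
    * ∏ i ∈ Λ, Real.exp (β * h i * confV Λ η τ i)

/-- The Ising Boltzmann weight with boundary condition `η`. -/
noncomputable def isingW {d : ℕ} (β : ℝ) (Jc : Edge d → ℝ) (h : V d → ℝ)
    (Λ : Finset (V d)) (η : V d → ℝ) (τ : {x // x ∈ Λ} → Bool) : ℝ :=
  Real.exp (β * (∑ e ∈ edgesTouch Λ, Jc e * confV Λ η τ e.1 * confV Λ η τ (eshift e)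
    + ∑ i ∈ Λ, h i * confV Λ η τ i))

/-- The graph on `ℤ^d` whose edges are the open (`ω_e = 1`) edges of `E`. -/
def openGraph {d : ℕ} (E : Finset (Edge d)) (ω : {e // e ∈ E} → Bool) :
    SimpleGraph (V d) :=
  SimpleGraph.fromRel (fun i j =>
    ∃ e : {e // e ∈ E}, ω e = true ∧ i = e.val.1 ∧ j = eshift e.val)

/-- The random-cluster weight of `ω`:
`B_J(ω) · Π_C (1 + e^{-2β Σ_{i∈C} h_i})`, where the product runs over the open
connected components meeting `Λ` (for `wired = true`, only over those entirely
contained in `Λ`). -/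
noncomputable def RCweight {d : ℕ} (β : ℝ) (Jc : Edge d → ℝ) (h : V d → ℝ)
    (Λ : Finset (V d)) (E : Finset (Edge d)) (wired : Bool)
    (ω : {e // e ∈ E} → Bool) : ℝ := by
  classical
  exact (∏ e : {e // e ∈ E}, if ω e then Real.exp (2 * β * Jc e.val) - 1 else 1)
    * ∏ c ∈ (Λ.image (openGraph E ω).connectedComponentMk).filter
        (fun c => wired = false ∨
          ∀ x, (openGraph E ω).connectedComponentMk x = c → x ∈ Λ),
      (1 + Real.exp (-(2 * β) *
        ∑ i ∈ Λ.filter (fun i => (openGraph E ω).connectedComponentMk i = c), h i))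


lemma confV_pm {d : ℕ} (Λ : Finset (V d)) (η : V d → ℝ)
    (hη : ∀ i, η i = 1 ∨ η i = -1) (τ : {x // x ∈ Λ} → Bool) (x : V d) :
    confV Λ η τ x = 1 ∨ confV Λ η τ x = -1 := by
  unfold confV
  split_ifs with h1 h2
  · left; rfl
  · right; rfl
  · exact hη x

lemma edge_factor (β J a b : ℝ) (ha : a = 1 ∨ a = -1) (hb : b = 1 ∨ b = -1) :
    ((if a = b then Real.exp (2 * β * J) - 1 else 0) + 1)
      = Real.exp (β * J) * Real.exp (β * (J * a * b)) := by
  rw [← Real.exp_add]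
  rcases ha with ha | ha <;> rcases hb with hb | hb <;> subst ha <;> subst hb <;>
    norm_num <;> ring_nf

lemma sum_ES {d : ℕ} (β : ℝ) (Jc : Edge d → ℝ) (h : V d → ℝ)
    (Λ : Finset (V d)) (η : V d → ℝ) (hη : ∀ i, η i = 1 ∨ η i = -1)
    (τ : {x // x ∈ Λ} → Bool) :
    (∑ ω : {e // e ∈ edgesTouch Λ} → Bool, ESweight β Jc h Λ (edgesTouch Λ) η τ ω)
      = (∏ e ∈ edgesTouch Λ, Real.exp (β * Jc e)) * isingW β Jc h Λ η τ := by
  classical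
  set E := edgesTouch Λ with hE
  set σ := confV Λ η τ with hσ
  have hswap :
      (∑ ω : {e // e ∈ E} → Bool,
        ∏ e : {e // e ∈ E},
          (if ω e then
            (if σ e.val.1 = σ (eshift e.val) then Real.exp (2 * β * Jc e.val) - 1 else 0)
          else 1))
      = ∏ e : {e // e ∈ E},
          ((if σ e.val.1 = σ (eshift e.val) then Real.exp (2 * β * Jc e.val) - 1 else 0) + 1) := by
    have hps := Finset.prod_univ_sum (fun _ : {e // e ∈ E} => (Finset.univ : Finset Bool))
      (fun e b => if b then
        (if σ e.val.1 = σ (eshift e.val) then Real.exp (2 * β * Jc e.val) - 1 else 0) else 1)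
    rw [← Fintype.piFinset_univ, ← hps]
    refine Finset.prod_congr rfl ?_
    intro e _
    simp [Fintype.sum_bool]
  unfold ESweight
  rw [← Finset.sum_mul, hswap]
  have hprod : (∏ e : {e // e ∈ E},
      ((if σ e.val.1 = σ (eshift e.val) then Real.exp (2 * β * Jc e.val) - 1 else 0) + 1))
      = (∏ e ∈ E, Real.exp (β * Jc e)) *
        Real.exp (β * ∑ e ∈ E, Jc e * σ e.1 * σ (eshift e)) := by
    have h1 : (∏ e : {e // e ∈ E},
        ((if σ e.val.1 = σ (eshift e.val) then Real.exp (2 * β * Jc e.val) - 1 else 0) + 1))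
        = ∏ e ∈ E, (Real.exp (β * Jc e) * Real.exp (β * (Jc e * σ e.1 * σ (eshift e)))) := by
      rw [← Finset.prod_attach E
        (fun e => Real.exp (β * Jc e) * Real.exp (β * (Jc e * σ e.1 * σ (eshift e))))]
      refine Finset.prod_congr rfl ?_
      intro e _
      exact edge_factor β (Jc e.val) _ _ (confV_pm Λ η hη τ _) (confV_pm Λ η hη τ _)
    rw [h1, Finset.prod_mul_distrib, Finset.mul_sum, Real.exp_sum]
  rw [hprod]
  unfold isingW
  rw [mul_add, Real.exp_add]
  have h2 : (∏ i ∈ Λ, Real.exp (β * h i * σ i))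
      = Real.exp (β * ∑ i ∈ Λ, h i * σ i) := by
    rw [Finset.mul_sum, Real.exp_sum]
    refine Finset.prod_congr rfl ?_
    intro i _
    ring_nf
  rw [h2]
  ring

/-- Spin marginal of the Edwards–Sokal coupling: for a finite
`Λ ⊂ ℤ^d`, `β > 0`, nonnegative couplings `(J_e)`, a field `(h_i)`, a `±1`-valued
boundary condition with nonvanishing ES partition function, and any function `f`
of the spins, the spin marginal of `φ^{ES}_Λ` equals the Ising Gibbs expectation. -/
theorem ES_spin_marginal
    (d : ℕ) (hd : 1 ≤ d) (Λ : Finset (V d)) (β : ℝ) (hβ : 0 < β)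
    (Jc : Edge d → ℝ) (hJ : ∀ e, 0 ≤ Jc e) (h : V d → ℝ)
    (η : V d → ℝ) (hη : ∀ i, η i = 1 ∨ η i = -1)
    (hZ : (∑ τ : {x // x ∈ Λ} → Bool, ∑ ω : {e // e ∈ edgesTouch Λ} → Bool,
        ESweight β Jc h Λ (edgesTouch Λ) η τ ω) ≠ 0)
    (f : (V d → ℝ) → ℝ) :
    (∑ τ : {x // x ∈ Λ} → Bool, ∑ ω : {e // e ∈ edgesTouch Λ} → Bool,
        f (confV Λ η τ) * ESweight β Jc h Λ (edgesTouch Λ) η τ ω) /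
      (∑ τ : {x // x ∈ Λ} → Bool, ∑ ω : {e // e ∈ edgesTouch Λ} → Bool,
        ESweight β Jc h Λ (edgesTouch Λ) η τ ω)
    = (∑ τ : {x // x ∈ Λ} → Bool, f (confV Λ η τ) * isingW β Jc h Λ η τ) /
      (∑ τ : {x // x ∈ Λ} → Bool, isingW β Jc h Λ η τ) := by
  classical
  have C : ℝ := 0
  have key : ∀ τ : {x // x ∈ Λ} → Bool,
      (∑ ω : {e // e ∈ edgesTouch Λ} → Bool, ESweight β Jc h Λ (edgesTouch Λ) η τ ω)
      = (∏ e ∈ edgesTouch Λ, Real.exp (β * Jc e)) * isingW β Jc h Λ η τ :=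
    fun τ => sum_ES β Jc h Λ η hη τ
  have hC : (∏ e ∈ edgesTouch Λ, Real.exp (β * Jc e)) ≠ 0 :=
    ne_of_gt (Finset.prod_pos (fun e _ => Real.exp_pos _))
  have hnum : (∑ τ : {x // x ∈ Λ} → Bool, ∑ ω : {e // e ∈ edgesTouch Λ} → Bool,
      f (confV Λ η τ) * ESweight β Jc h Λ (edgesTouch Λ) η τ ω)
      = (∏ e ∈ edgesTouch Λ, Real.exp (β * Jc e)) *
        ∑ τ : {x // x ∈ Λ} → Bool, f (confV Λ η τ) * isingW β Jc h Λ η τ := by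
    rw [Finset.mul_sum]
    refine Finset.sum_congr rfl ?_
    intro τ _
    rw [← Finset.mul_sum, key τ]
    ring
  have hden : (∑ τ : {x // x ∈ Λ} → Bool, ∑ ω : {e // e ∈ edgesTouch Λ} → Bool,
      ESweight β Jc h Λ (edgesTouch Λ) η τ ω)
      = (∏ e ∈ edgesTouch Λ, Real.exp (β * Jc e)) *
        ∑ τ : {x // x ∈ Λ} → Bool, isingW β Jc h Λ η τ := by
    rw [Finset.mul_sum]
    exact Finset.sum_congr rfl (fun τ _ => key τ)
  rw [hnum, hden, mul_div_mul_left _ _ hC]
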